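/- For every n ≥ 1: (a) each coface map dʲ : TS^{n−1} → TSⁿ (0 ≤ j ≤ n), induced by the injective monotone map δʲ : [n−1] → [n] applied to the column index, is a monomorphism of scaled simplicial sets; and (b) the union of the images of d⁰, …, dⁿ in TSⁿ is exactly the subcomplex of TSⁿ given by the union of the image of Δ² × ∂Δⁿ ⊆ TSⁿ₊ and the image of Ω(Δ² × ∂Δⁿ) ⊆ TSⁿ₋. -/

import Mathlib

open CategoryTheory Simplicial
namespace ScaledSSet

def stdSimplex (n : ℕ) : SSet.{0} where
  obj m := Fin (m.unop.len + 1) →o Fin (n + 1)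
  map φ := ↾fun f => f.comp φ.unop.toOrderHom
  map_id m := by refine ConcreteCategory.hom_ext _ _ fun f => ?_; ext x; rfl
  map_comp φ ψ := by refine ConcreteCategory.hom_ext _ _ fun f => ?_; ext x; rfl

instance stdFunLike (n : ℕ) (m : SimplexCategoryᵒᵖ) :
    FunLike ((stdSimplex n).obj m) (Fin (m.unop.len + 1)) (Fin (n + 1)) :=
  inferInstanceAs (FunLike (Fin (m.unop.len + 1) →o Fin (n + 1)) _ _)

@[simp] lemma stdSimplex_mk_apply {n : ℕ} {m : SimplexCategoryᵒᵖ}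
    (f : Fin (m.unop.len + 1) → Fin (n + 1)) (hf : Monotone f) (x : Fin (m.unop.len + 1)) :
    (⟨f, hf⟩ : (stdSimplex n).obj m) x = f x := rfl

@[simp] lemma stdSimplex_map_apply {n : ℕ} {m m' : SimplexCategoryᵒᵖ} (φ : m ⟶ m')
    (f : (stdSimplex n).obj m) (x : Fin (m'.unop.len + 1)) :
    ((stdSimplex n).map φ f) x = f (φ.unop.toOrderHom x) := rfl

def subOf (X : SSet.{0}) (P : ∀ m : SimplexCategoryᵒᵖ, Set (X.obj m))
    (hP : ∀ {m m' : SimplexCategoryᵒᵖ} (φ : m ⟶ m') {σ : X.obj m},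
      σ ∈ P m → X.map φ σ ∈ P m') : SSet.{0} where
  obj m := P m
  map φ := ↾fun σ => ⟨X.map φ σ.1, hP φ σ.2⟩
  map_id _ := by refine ConcreteCategory.hom_ext _ _ fun σ => ?_; apply Subtype.ext; exact FunctorToTypes.map_id_apply X σ.1
  map_comp φ ψ := by refine ConcreteCategory.hom_ext _ _ fun σ => ?_; apply Subtype.ext; exact FunctorToTypes.map_comp_apply X φ ψ σ.1

def subIncl (X : SSet.{0}) (P : ∀ m : SimplexCategoryᵒᵖ, Set (X.obj m))
    (hP : ∀ {m m' : SimplexCategoryᵒᵖ} (φ : m ⟶ m') {σ : X.obj m},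
      σ ∈ P m → X.map φ σ ∈ P m') : subOf X P hP ⟶ X where
  app _ := ↾fun σ => σ.1
  naturality _ _ _ := rfl

def IsDegen2 (X : SSet.{0}) (σ : X _⦋2⦌) : Prop :=
  ∃ τ : X _⦋1⦌, σ = X.σ 0 τ ∨ σ = X.σ 1 τ

lemma isDegen2_of_sub (X : SSet.{0}) (P : ∀ m : SimplexCategoryᵒᵖ, Set (X.obj m))
    (hP : ∀ {m m' : SimplexCategoryᵒᵖ} (φ : m ⟶ m') {σ : X.obj m},
      σ ∈ P m → X.map φ σ ∈ P m')
    (σ : (subOf X P hP) _⦋2⦌) (h : IsDegen2 (subOf X P hP) σ) : IsDegen2 X σ.1 := by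
  obtain ⟨τ, h | h⟩ := h
  · exact ⟨τ.1, Or.inl (by subst h; rfl)⟩
  · exact ⟨τ.1, Or.inr (by subst h; rfl)⟩

lemma isDegen2_map {X Y : SSet.{0}} (f : X ⟶ Y) {σ : X _⦋2⦌}
    (h : IsDegen2 X σ) : IsDegen2 Y (f.app _ σ) := by
  obtain ⟨τ, h | h⟩ := h
  · exact ⟨f.app _ τ, Or.inl (by subst h; exact FunctorToTypes.naturality f _ τ)⟩
  · exact ⟨f.app _ τ, Or.inr (by subst h; exact FunctorToTypes.naturality f _ τ)⟩

structure SScaled : Type 1 where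
  carrier : SSet.{0}
  thin : Set (carrier _⦋2⦌)
  degen_mem : ∀ σ : carrier _⦋2⦌, IsDegen2 carrier σ → σ ∈ thin

@[ext]
structure SHom (A B : SScaled) : Type where
  map : A.carrier ⟶ B.carrier
  preserves : ∀ σ ∈ A.thin, map.app (Opposite.op (SimplexCategory.mk 2)) σ ∈ B.thin

instance : Category SScaled where
  Hom := SHom
  id A := ⟨𝟙 A.carrier, fun σ h => by simpa using h⟩
  comp f g := ⟨f.map ≫ g.map, fun σ h => by
    simpa using g.preserves _ (f.preserves _ h)⟩
  id_comp f := by apply SHom.ext; simp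
  comp_id f := by apply SHom.ext; simp
  assoc f g h := by apply SHom.ext; simp

def SScaled.restrict (B : SScaled) (P : ∀ m : SimplexCategoryᵒᵖ, Set (B.carrier.obj m))
    (hP : ∀ {m m' : SimplexCategoryᵒᵖ} (φ : m ⟶ m') {σ : B.carrier.obj m},
      σ ∈ P m → B.carrier.map φ σ ∈ P m') : SScaled where
  carrier := subOf B.carrier P hP
  thin := {σ | σ.1 ∈ B.thin}
  degen_mem σ h := B.degen_mem _ (isDegen2_of_sub _ _ _ _ h)

def SScaled.restrictIncl (B : SScaled) (P : ∀ m : SimplexCategoryᵒᵖ, Set (B.carrier.obj m))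
    (hP : ∀ {m m' : SimplexCategoryᵒᵖ} (φ : m ⟶ m') {σ : B.carrier.obj m},
      σ ∈ P m → B.carrier.map φ σ ∈ P m') : B.restrict P hP ⟶ B where
  map := subIncl B.carrier P hP
  preserves _ h := h

def tri {n : ℕ} (a b c : Fin (n + 1)) (hab : a ≤ b) (hbc : b ≤ c) :
    (stdSimplex n) _⦋2⦌ :=
  ⟨![a, b, c], by
    intro i j hij
    fin_cases i <;> fin_cases j <;>
      simp_all [Matrix.cons_val_zero, Matrix.cons_val_one, Matrix.head_cons] <;>
      first
        | rfl
        | exact hab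
        | exact hbc
        | exact le_trans hab hbc⟩

/-! ### The generating scaled anodyne maps -/

/-- The membership predicate of the horn `Λⁿᵢ ⊆ Δⁿ`: the simplices whose vertices,
together with `i`, do not exhaust `[n]`. -/
def hornP (n : ℕ) (i : Fin (n + 1)) :
    ∀ m : SimplexCategoryᵒᵖ, Set ((stdSimplex n).obj m) :=
  fun _ => {f | ∃ s : Fin (n + 1), s ≠ i ∧ ∀ x, f x ≠ s}

lemma hornP_closed (n : ℕ) (i : Fin (n + 1)) :
    ∀ {m m' : SimplexCategoryᵒᵖ} (φ : m ⟶ m') {σ : (stdSimplex n).obj m},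
      σ ∈ hornP n i m → (stdSimplex n).map φ σ ∈ hornP n i m' := by
  rintro m m' φ σ ⟨s, hsi, hs⟩
  exact ⟨s, hsi, fun x => hs _⟩

/-- The 2-simplex `Δ^{i-1,i,i+1}` of `Δⁿ`, for `0 < i < n`. -/
def an1Tri (n i : ℕ) (h0 : 0 < i) (hn : i < n) : (stdSimplex n) _⦋2⦌ :=
  tri ⟨i - 1, by omega⟩ ⟨i, by omega⟩ ⟨i + 1, by omega⟩
    (Fin.mk_le_mk.mpr (by omega)) (Fin.mk_le_mk.mpr (by omega))

/-- The target of the generating map (An1): `Δⁿ` scaled by `{Δ^{i-1,i,i+1}} ∪ {degenerate}`. -/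
def an1Target (n i : ℕ) (h0 : 0 < i) (hn : i < n) : SScaled where
  carrier := stdSimplex n
  thin := {σ | IsDegen2 _ σ ∨ σ = an1Tri n i h0 hn}
  degen_mem _ h := Or.inl h

/-- The source of the generating map (An1): the horn `Λⁿᵢ` with the restricted scaling. -/
def an1Source (n i : ℕ) (h0 : 0 < i) (hn : i < n) : SScaled :=
  (an1Target n i h0 hn).restrict (hornP n ⟨i, by omega⟩) (hornP_closed n ⟨i, by omega⟩)

/-- The generating scaled anodyne map (An1). -/
def an1Map (n i : ℕ) (h0 : 0 < i) (hn : i < n) :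
    an1Source n i h0 hn ⟶ an1Target n i h0 hn :=
  SScaled.restrictIncl (an1Target n i h0 hn) (hornP n ⟨i, by omega⟩)
    (hornP_closed n ⟨i, by omega⟩)

/-- The scaling `T₀` of `Δ⁴` appearing in the generating map (An2). -/
def an2T0 : Set ((stdSimplex 4) _⦋2⦌) :=
  {σ | IsDegen2 _ σ ∨
    σ = tri (0 : Fin 5) 2 4 (by decide) (by decide) ∨
    σ = tri (1 : Fin 5) 2 3 (by decide) (by decide) ∨
    σ = tri (0 : Fin 5) 1 3 (by decide) (by decide) ∨
    σ = tri (1 : Fin 5) 3 4 (by decide) (by decide) ∨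
    σ = tri (0 : Fin 5) 1 2 (by decide) (by decide)}

def an2Source : SScaled where
  carrier := stdSimplex 4
  thin := an2T0
  degen_mem _ h := Or.inl h

def an2Target : SScaled where
  carrier := stdSimplex 4
  thin := an2T0 ∪
    {tri (0 : Fin 5) 3 4 (by decide) (by decide),
     tri (0 : Fin 5) 1 4 (by decide) (by decide)}
  degen_mem _ h := Or.inl (Or.inl h)

/-- The generating scaled anodyne map (An2). -/
def an2Map : an2Source ⟶ an2Target where
  map := 𝟙 _
  preserves σ h := Or.inl h

/-- The collapse of a simplicial subset `A ⊆ X` to a point: a concrete model of the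
pushout `X ⨿_A Δ⁰` (for `A` nonempty in each degree). -/
def collapse (X : SSet.{0}) (A : ∀ m : SimplexCategoryᵒᵖ, Set (X.obj m))
    (hA : ∀ {m m' : SimplexCategoryᵒᵖ} (φ : m ⟶ m') {σ : X.obj m},
      σ ∈ A m → X.map φ σ ∈ A m') : SSet.{0} where
  obj m := Quot (fun f g : X.obj m => f ∈ A m ∧ g ∈ A m)
  map φ := ↾Quot.map (X.map φ) (fun _ _ h => ⟨hA φ h.1, hA φ h.2⟩)
  map_id m := by
    refine ConcreteCategory.hom_ext _ _ fun σ => ?_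
    induction σ using Quot.ind with
    | _ f => exact congrArg (Quot.mk _) (FunctorToTypes.map_id_apply X f)
  map_comp φ ψ := by
    refine ConcreteCategory.hom_ext _ _ fun σ => ?_
    induction σ using Quot.ind with
    | _ f => exact congrArg (Quot.mk _) (FunctorToTypes.map_comp_apply X φ ψ f)

/-- The simplices of `Δⁿ` lying in the edge `Δ^{0,1}`. -/
def edge01P (n : ℕ) : ∀ m : SimplexCategoryᵒᵖ, Set ((stdSimplex n).obj m) :=
  fun _ => {f | ∀ x, (f x).val ≤ 1}

lemma edge01P_closed (n : ℕ) :
    ∀ {m m' : SimplexCategoryᵒᵖ} (φ : m ⟶ m') {σ : (stdSimplex n).obj m},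
      σ ∈ edge01P n m → (stdSimplex n).map φ σ ∈ edge01P n m' := by
  intro m m' φ σ h x
  exact h _

/-- The underlying simplicial set of the target of (An3): `Δⁿ ⨿_{Δ^{0,1}} Δ⁰`. -/
def an3TargetSSet (n : ℕ) (hn : 2 < n) : SSet.{0} :=
  collapse (stdSimplex n) (edge01P n) (edge01P_closed n)

def an3Horn (n : ℕ) (hn : 2 < n) : SSet.{0} :=
  subOf (stdSimplex n) (hornP n 0) (hornP_closed n 0)

/-- The underlying simplicial set of the source of (An3): `Λⁿ₀ ⨿_{Δ^{0,1}} Δ⁰`. -/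
def an3SourceSSet (n : ℕ) (hn : 2 < n) : SSet.{0} :=
  collapse (an3Horn n hn) (fun m => {f | f.1 ∈ edge01P n m})
    (fun {m m'} φ {σ} h => edge01P_closed n φ h)

def an3Tri (n : ℕ) (hn : 2 < n) : (stdSimplex n) _⦋2⦌ :=
  tri ⟨0, by omega⟩ ⟨1, by omega⟩ ⟨n, by omega⟩
    (Fin.mk_le_mk.mpr (by omega)) (Fin.mk_le_mk.mpr (by omega))

lemma an3Tri_mem_horn (n : ℕ) (hn : 2 < n) :
    an3Tri n hn ∈ hornP n 0 (Opposite.op (SimplexCategory.mk 2)) := by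
  refine ⟨⟨2, by omega⟩, Fin.ne_of_val_ne (by simp), fun x => ?_⟩
  fin_cases x
  · exact Fin.ne_of_val_ne (show (0 : ℕ) ≠ 2 by omega)
  · exact Fin.ne_of_val_ne (show (1 : ℕ) ≠ 2 by omega)
  · exact Fin.ne_of_val_ne (show (n : ℕ) ≠ 2 by omega)

def an3Target (n : ℕ) (hn : 2 < n) : SScaled where
  carrier := an3TargetSSet n hn
  thin := {x | IsDegen2 _ x ∨ x = Quot.mk _ (an3Tri n hn)}
  degen_mem _ h := Or.inl h

def an3Source (n : ℕ) (hn : 2 < n) : SScaled where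
  carrier := an3SourceSSet n hn
  thin := {x | IsDegen2 _ x ∨ x = Quot.mk _ ⟨an3Tri n hn, an3Tri_mem_horn n hn⟩}
  degen_mem _ h := Or.inl h

/-- The generating scaled anodyne map (An3). -/
def an3proj (n : ℕ) (hn : 2 < n) : an3SourceSSet n hn ⟶ an3TargetSSet n hn where
  app m := ↾Quot.map (fun (f : (an3Horn n hn).obj m) => f.1) (fun _ _ h => ⟨h.1, h.2⟩)
  naturality _ _ φ := ConcreteCategory.hom_ext _ _ (Quot.ind (fun f => rfl))

def an3Map (n : ℕ) (hn : 2 < n) : an3Source n hn ⟶ an3Target n hn where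
  map := an3proj n hn
  preserves σ h := by
    obtain h | h := h
    · exact Or.inl (isDegen2_map (an3proj n hn) h)
    · exact Or.inr (by subst h; rfl)

/-! ### Weakly saturated classes and scaled anodyne maps -/

section Saturation

open Limits

variable {C : Type*} [Category C]

/-- `f` is a retract of `g` (in the arrow category). -/
def IsRetractOf {A B X Y : C} (f : A ⟶ B) (g : X ⟶ Y) : Prop :=
  ∃ (i : A ⟶ X) (p : X ⟶ A) (j : B ⟶ Y) (q : Y ⟶ B),
    i ≫ p = 𝟙 A ∧ j ≫ q = 𝟙 B ∧ i ≫ g = f ≫ j ∧ g ≫ q = p ≫ f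

/-- The restriction, to `Set.Iio j`, of a functor indexed by a (well-)ordered type,
viewed as a cocone with apex `F.obj j`. -/
@[simps]
def restCocone {J : Type} [Preorder J] (F : J ⥤ C) (j : J) :
    Cocone ((Monotone.functor (f := (Subtype.val : Set.Iio j → J))
      (fun _ _ h => h)) ⋙ F) where
  pt := F.obj j
  ι :=
    { app := fun i => F.map (homOfLE i.2.le)
      naturality := fun i i' hii' => by
        dsimp [Monotone.functor]
        rw [← F.map_comp]
        simp }

/-- A class of morphisms is weakly saturated if it is stable under pushouts
(cobase change), retracts, and transfinite composition. -/
structure IsWeaklySaturated (P : MorphismProperty C) : Prop where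
  pushouts : ∀ ⦃A B A' B' : C⦄ (f : A ⟶ B) (g : A ⟶ A') (h : B ⟶ B') (i : A' ⟶ B'),
    IsPushout f g h i → P f → P i
  retracts : ∀ ⦃A B X Y : C⦄ (f : A ⟶ B) (g : X ⟶ Y), IsRetractOf f g → P g → P f
  transfinite : ∀ (J : Type) [LinearOrder J] [OrderBot J] [SuccOrder J]
    [WellFoundedLT J] (F : J ⥤ C) (c : Cocone F) (_ : IsColimit c)
    (_ : ∀ j : J, Order.IsSuccLimit j → Nonempty (IsColimit (restCocone F j)))
    (_ : ∀ j : J, ¬IsMax j → P (F.map (homOfLE (Order.le_succ j)))),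
    P (c.ι.app ⊥)

end Saturation

/-- The generating scaled anodyne maps (An1), (An2), (An3). -/
inductive AnodyneGenerator : ∀ ⦃A B : SScaled⦄, (A ⟶ B) → Prop where
  | an1 (n i : ℕ) (h0 : 0 < i) (hn : i < n) : AnodyneGenerator (an1Map n i h0 hn)
| an2 : AnodyneGenerator an2Map
| an3 (n : ℕ) (hn : 2 < n) : AnodyneGenerator (an3Map n hn)

/-- A map of scaled simplicial sets is *scaled anodyne* if it lies in the weakly
saturated class of maps generated by the maps (An1), (An2) and (An3); that is,
if it lies in every weakly saturated class of morphisms of `SScaled` containing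
these generating maps. -/
def ScaledAnodyne : MorphismProperty SScaled := fun _ _ f =>
  ∀ P : MorphismProperty SScaled, IsWeaklySaturated P →
    (∀ ⦃A B : SScaled⦄ (g : A ⟶ B), AnodyneGenerator g → P g) → P f

/-! ### The scaled simplicial set `TSⁿ₊` -/

/-- The (objectwise) product of two simplicial sets. -/
def prodSSet (X Y : SSet.{0}) : SSet.{0} where
  obj m := X.obj m × Y.obj m
  map φ := ↾fun p => (X.map φ p.1, Y.map φ p.2)
  map_id m := by
    refine ConcreteCategory.hom_ext _ _ fun p => ?_
    exact Prod.ext (FunctorToTypes.map_id_apply X p.1) (FunctorToTypes.map_id_apply Y p.2)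
  map_comp φ ψ := by
    refine ConcreteCategory.hom_ext _ _ fun p => ?_
    exact Prod.ext (FunctorToTypes.map_comp_apply X φ ψ p.1)
      (FunctorToTypes.map_comp_apply Y φ ψ p.2)

/-- The underlying simplicial set `Δ² × Δⁿ` of `TSⁿ₊`. -/
def TSplusSSet (n : ℕ) : SSet.{0} := prodSSet (stdSimplex 2) (stdSimplex n)

/-- The thin 2-simplices of `TSⁿ₊`, writing the vertex `(0,k)` as `00k`, `(1,k)` as
`01k` and `(2,k)` as `11k`: all triangles `Δ^{ijk,ijk',ijk''}` with
`ij ∈ {00,01,11}` and `k < k' < k''`; all `Δ^{00k,01k',01k''}` with `k ≤ k' < k''`;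
all `Δ^{01k,01k',11k''}` with `k < k' ≤ k''`; all `Δ^{00k,01k',11k''}` with
`k ≤ k' ≤ k''`; and all degenerate 2-simplices. -/
def thinPlus (n : ℕ) : Set ((TSplusSSet n) _⦋2⦌) :=
  {σ | IsDegen2 (TSplusSSet n) σ ∨
    (σ.1 0 = σ.1 1 ∧ σ.1 1 = σ.1 2 ∧ σ.2 0 < σ.2 1 ∧ σ.2 1 < σ.2 2) ∨
    ((σ.1 0).val = 0 ∧ (σ.1 1).val = 1 ∧ (σ.1 2).val = 1 ∧
      σ.2 0 ≤ σ.2 1 ∧ σ.2 1 < σ.2 2) ∨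
    ((σ.1 0).val = 1 ∧ (σ.1 1).val = 1 ∧ (σ.1 2).val = 2 ∧
      σ.2 0 < σ.2 1 ∧ σ.2 1 ≤ σ.2 2) ∨
    ((σ.1 0).val = 0 ∧ (σ.1 1).val = 1 ∧ (σ.1 2).val = 2 ∧
      σ.2 0 ≤ σ.2 1 ∧ σ.2 1 ≤ σ.2 2)}

/-- The scaled simplicial set `TSⁿ₊`. -/
def TSplus (n : ℕ) : SScaled where
  carrier := TSplusSSet n
  thin := thinPlus n
  degen_mem _ h := Or.inl h

/-- The simplices of `Δ² × Δⁿ` lying in `Δ² × Λⁿᵢ`. -/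
def plusHornP (n : ℕ) (i : Fin (n + 1)) :
    ∀ m : SimplexCategoryᵒᵖ, Set ((TSplusSSet n).obj m) :=
  fun _ => {σ | ∃ s : Fin (n + 1), s ≠ i ∧ ∀ x, σ.2 x ≠ s}

lemma plusHornP_closed (n : ℕ) (i : Fin (n + 1)) :
    ∀ {m m' : SimplexCategoryᵒᵖ} (φ : m ⟶ m') {σ : (TSplusSSet n).obj m},
      σ ∈ plusHornP n i m → (TSplusSSet n).map φ σ ∈ plusHornP n i m' := by
  rintro m m' φ σ ⟨s, hsi, hs⟩
  exact ⟨s, hsi, fun x => hs _⟩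

/-! ### The scaled simplicial set `TSⁿ₋` -/

/-- The vertex set of the `(n+2)`-simplex `{000,…,00k} ∪ {10k,…,10k'} ∪ {11k',…,11n}`
of `Δⁿ ⋆ (Δⁿ)ᵒᵖ ⋆ Δⁿ ≅ Δ^{3n+2}`, under the identification of the vertex `00j` with
`j`, `10j` with `2n+1−j`, and `11j` with `2n+2+j`. -/
def inMinus (n k k' v : ℕ) : Prop :=
  v ≤ k ∨ (2 * n + 1 ≤ v + k' ∧ v + k ≤ 2 * n + 1) ∨ 2 * n + 2 + k' ≤ v

/-- The simplices of `Δ^{3n+2}` lying in the union of the `(n+2)`-simplices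
spanning `TSⁿ₋`. -/
def minusP (n : ℕ) : ∀ m : SimplexCategoryᵒᵖ, Set ((stdSimplex (3 * n + 2)).obj m) :=
  fun _ => {f | ∃ k k' : ℕ, k ≤ k' ∧ k' ≤ n ∧ ∀ x, inMinus n k k' (f x).val}

lemma minusP_closed (n : ℕ) :
    ∀ {m m' : SimplexCategoryᵒᵖ} (φ : m ⟶ m') {σ : (stdSimplex (3 * n + 2)).obj m},
      σ ∈ minusP n m → (stdSimplex (3 * n + 2)).map φ σ ∈ minusP n m' := by
  rintro m m' φ σ ⟨k, k', hkk', hk'n, h⟩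
  exact ⟨k, k', hkk', hk'n, fun x => h _⟩

/-- The underlying simplicial set of `TSⁿ₋`: the simplicial subset of
`Δⁿ ⋆ (Δⁿ)ᵒᵖ ⋆ Δⁿ ≅ Δ^{3n+2}` spanned by the `(n+2)`-simplices with vertex set
`{000,…,00k} ∪ {10k,…,10k'} ∪ {11k',…,11n}` for `0 ≤ k ≤ k' ≤ n`. -/
def TSminusSSet (n : ℕ) : SSet.{0} :=
  subOf (stdSimplex (3 * n + 2)) (minusP n) (minusP_closed n)

/-- Two vertices of `Δ^{3n+2}` lie in the same row (`00`, `10` or `11`). -/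
def sameRow (n a b : ℕ) : Prop :=
  (a ≤ n ∧ b ≤ n) ∨ (n + 1 ≤ a ∧ a ≤ 2 * n + 1 ∧ n + 1 ≤ b ∧ b ≤ 2 * n + 1) ∨
    (2 * n + 2 ≤ a ∧ 2 * n + 2 ≤ b)

/-- The thin 2-simplices of `TSⁿ₋`: all triangles `Δ^{ijk,ijk',ijk''}` with
`ij ∈ {00,10,11}` and `k < k' < k''`; all `Δ^{00k,00k',10k''}` with `k < k' ≤ k''`;
all `Δ^{10k,11k',11k''}` with `k ≤ k' < k''`; and all degenerate 2-simplices. -/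
def thinMinus (n : ℕ) : Set ((TSminusSSet n) _⦋2⦌) :=
  {σ | IsDegen2 (TSminusSSet n) σ ∨
    (sameRow n (σ.1 0).val (σ.1 1).val ∧ sameRow n (σ.1 1).val (σ.1 2).val ∧
      (σ.1 0).val < (σ.1 1).val ∧ (σ.1 1).val < (σ.1 2).val) ∨
    ((σ.1 0).val ≤ n ∧ (σ.1 1).val ≤ n ∧ n + 1 ≤ (σ.1 2).val ∧
      (σ.1 2).val ≤ 2 * n + 1 ∧ (σ.1 0).val < (σ.1 1).val ∧
      (σ.1 1).val + (σ.1 2).val ≤ 2 * n + 1) ∨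
    (n + 1 ≤ (σ.1 0).val ∧ (σ.1 0).val ≤ 2 * n + 1 ∧ 2 * n + 2 ≤ (σ.1 1).val ∧
      2 * n + 2 ≤ (σ.1 2).val ∧ 4 * n + 3 ≤ (σ.1 0).val + (σ.1 1).val ∧
      (σ.1 1).val < (σ.1 2).val)}

/-- The scaled simplicial set `TSⁿ₋`. -/
def TSminus (n : ℕ) : SScaled where
  carrier := TSminusSSet n
  thin := thinMinus n
  degen_mem _ h := Or.inl h

/-- The `Δⁿ`-index (column) of a vertex of `Δ^{3n+2}`: the vertex `00j`, `10j` or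
`11j` has index `j`. -/
def colIdx (n v : ℕ) : ℕ :=
  if v ≤ n then v else if v ≤ 2 * n + 1 then 2 * n + 1 - v else v - (2 * n + 2)
/-! ### The scaled simplicial set `TSⁿ = TSⁿ₊ ⨿_{(Δ¹×Δⁿ)♭} TSⁿ₋` -/

/-- The inclusion `[1] → [2]`, `0 ↦ 0`, `1 ↦ 2`. -/
def vert02 : Fin 2 →o Fin 3 :=
  ⟨![0, 2], by intro a b h; fin_cases a <;> fin_cases b <;> simp_all <;> decide⟩

/-- The map `Δ¹ × Δⁿ → Δ² × Δⁿ = TSⁿ₊`, `(0,k) ↦ 00k`, `(1,k) ↦ 11k`. -/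
def iotaPlus (n : ℕ) : prodSSet (stdSimplex 1) (stdSimplex n) ⟶ TSplusSSet n where
  app m := ↾fun p => (vert02.comp p.1, p.2)
  naturality _ _ φ := rfl

/-- The vertex map of the inclusion `Δ¹ × Δⁿ → TSⁿ₋`, `(0,k) ↦ 00k = k`,
`(1,k) ↦ 11k = 2n+2+k`. -/
def joinVert (n : ℕ) {m : SimplexCategoryᵒᵖ}
    (f : (stdSimplex 1).obj m) (g : (stdSimplex n).obj m) :
    (stdSimplex (3 * n + 2)).obj m :=
  ⟨fun x => if (f x).val = 0 then ⟨(g x).val, by have := (g x).isLt; omega⟩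
      else ⟨2 * n + 2 + (g x).val, by have := (g x).isLt; omega⟩,
    by
      intro x y hxy
      have hf : (f x).val ≤ (f y).val := f.monotone hxy
      have hg : (g x).val ≤ (g y).val := g.monotone hxy
      have h1 : (g x).val < n + 1 := (g x).isLt
      dsimp only
      split_ifs <;> exact Fin.mk_le_mk.mpr (by omega)⟩

lemma joinVert_app_of_zero (n : ℕ) {m : SimplexCategoryᵒᵖ}
    (f : (stdSimplex 1).obj m) (g : (stdSimplex n).obj m)
    (x : Fin (m.unop.len + 1)) (hx : (f x).val = 0) :
    ((joinVert n f g) x).val = (g x).val := by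
  show (if (f x).val = 0 then (⟨(g x).val, by have := (g x).isLt; omega⟩ : Fin (3 * n + 2 + 1))
      else ⟨2 * n + 2 + (g x).val, by have := (g x).isLt; omega⟩).val = (g x).val
  rw [if_pos hx]

lemma joinVert_app_of_ne_zero (n : ℕ) {m : SimplexCategoryᵒᵖ}
    (f : (stdSimplex 1).obj m) (g : (stdSimplex n).obj m)
    (x : Fin (m.unop.len + 1)) (hx : (f x).val ≠ 0) :
    ((joinVert n f g) x).val = 2 * n + 2 + (g x).val := by
  show (if (f x).val = 0 then (⟨(g x).val, by have := (g x).isLt; omega⟩ : Fin (3 * n + 2 + 1))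
      else ⟨2 * n + 2 + (g x).val, by have := (g x).isLt; omega⟩).val = 2 * n + 2 + (g x).val
  rw [if_neg hx]

lemma joinVert_mem (n : ℕ) {m : SimplexCategoryᵒᵖ}
    (f : (stdSimplex 1).obj m) (g : (stdSimplex n).obj m) :
    joinVert n f g ∈ minusP n m := by
  classical
  by_cases h1 : ∃ x, (f x).val ≠ 0
  · by_cases h0 : ∃ x, (f x).val = 0
    · obtain ⟨x0, hx0mem, hx0⟩ := Finset.exists_max_image
        (Finset.univ.filter fun x => (f x).val = 0) (fun x => (g x).val)
        (by obtain ⟨x, hx⟩ := h0; exact ⟨x, by simpa using hx⟩)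
      obtain ⟨x1, hx1mem, hx1⟩ := Finset.exists_min_image
        (Finset.univ.filter fun x => (f x).val ≠ 0) (fun x => (g x).val)
        (by obtain ⟨x, hx⟩ := h1; exact ⟨x, by simpa using hx⟩)
      have hx0f : (f x0).val = 0 := by simpa using hx0mem
      have hx1f : (f x1).val ≠ 0 := by simpa using hx1mem
      have hx01 : x0 ≤ x1 := by
        by_contra hcon
        push_neg at hcon
        have hle : (f x1).val ≤ (f x0).val := f.monotone hcon.le
        omega
      refine ⟨(g x0).val, (g x1).val, g.monotone hx01,
        Nat.lt_succ_iff.mp (g x1).isLt, fun x => ?_⟩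
      by_cases hx : (f x).val = 0
      · rw [inMinus, joinVert_app_of_zero n f g x hx]
        exact Or.inl (hx0 x (by simpa using hx))
      · rw [inMinus, joinVert_app_of_ne_zero n f g x hx]
        have := hx1 x (by simpa using hx)
        exact Or.inr (Or.inr (by omega))
    · refine ⟨0, 0, le_rfl, Nat.zero_le n, fun x => ?_⟩
      have hx : (f x).val ≠ 0 := not_exists.mp h0 x
      rw [inMinus, joinVert_app_of_ne_zero n f g x hx]
      exact Or.inr (Or.inr (by omega))
  · refine ⟨n, n, le_rfl, le_rfl, fun x => ?_⟩
    have hx : (f x).val = 0 := not_not.mp (not_exists.mp h1 x)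
    rw [inMinus, joinVert_app_of_zero n f g x hx]
    exact Or.inl (Nat.lt_succ_iff.mp (g x).isLt)

/-- The map `Δ¹ × Δⁿ → TSⁿ₋`, `(0,k) ↦ 00k`, `(1,k) ↦ 11k`. -/
def iotaMinus (n : ℕ) : prodSSet (stdSimplex 1) (stdSimplex n) ⟶ TSminusSSet n where
  app m := ↾fun p => ⟨joinVert n p.1 p.2, joinVert_mem n p.1 p.2⟩
  naturality m m' φ := rfl

/-- The gluing relation defining the pushout `TSⁿ₊ ⨿_{(Δ¹×Δⁿ)♭} TSⁿ₋`. -/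
def glueRel (n : ℕ) (m : SimplexCategoryᵒᵖ)
    (a b : (TSplusSSet n).obj m ⊕ (TSminusSSet n).obj m) : Prop :=
  ∃ x : (prodSSet (stdSimplex 1) (stdSimplex n)).obj m,
    a = Sum.inl ((iotaPlus n).app m x) ∧ b = Sum.inr ((iotaMinus n).app m x)

/-- The underlying simplicial set of the pushout `TSⁿ = TSⁿ₊ ⨿_{(Δ¹×Δⁿ)♭} TSⁿ₋`. -/
def TSnSSet (n : ℕ) : SSet.{0} where
  obj m := Quot (glueRel n m)
  map {m m'} φ := ↾Quot.map
    (Sum.map ((TSplusSSet n).map φ) ((TSminusSSet n).map φ))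
    (by
      rintro a b ⟨x, rfl, rfl⟩
      refine ⟨(prodSSet (stdSimplex 1) (stdSimplex n)).map φ x, ?_, ?_⟩
      · exact congrArg Sum.inl
          (FunctorToTypes.naturality (iotaPlus n) φ x)
      · exact congrArg Sum.inr
          (FunctorToTypes.naturality (iotaMinus n) φ x))
  map_id m := by
    refine ConcreteCategory.hom_ext _ _ fun q => ?_
    obtain ⟨a, rfl⟩ := Quot.exists_rep q
    have h : Sum.map ((TSplusSSet n).map (𝟙 m)) ((TSminusSSet n).map (𝟙 m)) a = a := by
      cases a with
      | inl p => exact congrArg Sum.inl (FunctorToTypes.map_id_apply _ p)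
      | inr q' => exact congrArg Sum.inr (FunctorToTypes.map_id_apply _ q')
    exact congrArg (Quot.mk (glueRel n m)) h
  map_comp {m m' m''} φ ψ := by
    refine ConcreteCategory.hom_ext _ _ fun q => ?_
    obtain ⟨a, rfl⟩ := Quot.exists_rep q
    have h : Sum.map ((TSplusSSet n).map (φ ≫ ψ)) ((TSminusSSet n).map (φ ≫ ψ)) a =
        Sum.map ((TSplusSSet n).map ψ) ((TSminusSSet n).map ψ)
          (Sum.map ((TSplusSSet n).map φ) ((TSminusSSet n).map φ) a) := by
      cases a with
      | inl p => exact congrArg Sum.inl (FunctorToTypes.map_comp_apply _ φ ψ p)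
      | inr q' => exact congrArg Sum.inr (FunctorToTypes.map_comp_apply _ φ ψ q')
    exact congrArg (Quot.mk (glueRel n m'')) h

lemma TSn_exists_rep (n : ℕ) (m : SimplexCategoryᵒᵖ) (x : (TSnSSet n).obj m) :
    ∃ a, x = Quot.mk (glueRel n m) a :=
  (Quot.exists_rep x).imp fun _ h => h.symm

/-- The thin 2-simplices of `TSⁿ`: the images of the thin 2-simplices of `TSⁿ₊`
and of `TSⁿ₋`. -/
def thinTSn (n : ℕ) : Set ((TSnSSet n) _⦋2⦌) :=
  {x | (∃ p ∈ thinPlus n, x = Quot.mk _ (Sum.inl p)) ∨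
       (∃ q ∈ thinMinus n, x = Quot.mk _ (Sum.inr q))}

/-- The scaled simplicial set `TSⁿ`. -/
def TSn (n : ℕ) : SScaled where
  carrier := TSnSSet n
  thin := thinTSn n
  degen_mem := by
    rintro x ⟨τ, hx | hx⟩ <;> subst hx <;>
      obtain ⟨a, rfl⟩ := TSn_exists_rep n _ τ <;>
      cases a with
      | inl p =>
          exact Or.inl ⟨_, Or.inl ⟨p, by first | (exact Or.inl rfl) | (exact Or.inr rfl)⟩, rfl⟩
      | inr q =>
          exact Or.inr ⟨_, Or.inl ⟨q, by first | (exact Or.inl rfl) | (exact Or.inr rfl)⟩, rfl⟩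

/-- The simplicial subset of `TSⁿ` given by the union of the image of a simplicial
subset of `TSⁿ₊` and the image of a simplicial subset of `TSⁿ₋`. -/
def TSnSubP (n : ℕ) (Pp : ∀ m : SimplexCategoryᵒᵖ, Set ((TSplusSSet n).obj m))
    (Pm : ∀ m : SimplexCategoryᵒᵖ, Set ((TSminusSSet n).obj m)) :
    ∀ m : SimplexCategoryᵒᵖ, Set ((TSnSSet n).obj m) :=
  fun m => {x | (∃ p ∈ Pp m, x = Quot.mk _ (Sum.inl p)) ∨
    (∃ q ∈ Pm m, x = Quot.mk _ (Sum.inr q))}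

lemma TSnSubP_closed (n : ℕ)
    (Pp : ∀ m : SimplexCategoryᵒᵖ, Set ((TSplusSSet n).obj m))
    (Pm : ∀ m : SimplexCategoryᵒᵖ, Set ((TSminusSSet n).obj m))
    (hPp : ∀ {m m' : SimplexCategoryᵒᵖ} (φ : m ⟶ m') {σ : (TSplusSSet n).obj m},
      σ ∈ Pp m → (TSplusSSet n).map φ σ ∈ Pp m')
    (hPm : ∀ {m m' : SimplexCategoryᵒᵖ} (φ : m ⟶ m') {σ : (TSminusSSet n).obj m},
      σ ∈ Pm m → (TSminusSSet n).map φ σ ∈ Pm m') :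
    ∀ {m m' : SimplexCategoryᵒᵖ} (φ : m ⟶ m') {x : (TSnSSet n).obj m},
      x ∈ TSnSubP n Pp Pm m → (TSnSSet n).map φ x ∈ TSnSubP n Pp Pm m' := by
  rintro m m' φ x (⟨p, hp, rfl⟩ | ⟨q, hq, rfl⟩)
  · exact Or.inl ⟨_, hPp φ hp, rfl⟩
  · exact Or.inr ⟨_, hPm φ hq, rfl⟩
/-! ### The cosimplicial structure of `TS^•`: coface maps -/

/-- The coface map `δʲ : [n] → [n+1]` on natural numbers. -/
def dval (j k : ℕ) : ℕ := if k < j then k else k + 1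

/-- The vertex map `Fin (3n+3) → Fin (3(n+1)+3)` of the coface map
`TSⁿ₋ → TS^{n+1}₋`, acting by `δʲ` on the column index in each row. -/
def psival (n j v : ℕ) : ℕ :=
  if v ≤ n then dval j v
  else if v ≤ 2 * n + 1 then 2 * (n + 1) + 1 - dval j (2 * n + 1 - v)
  else 2 * (n + 1) + 2 + dval j (v - (2 * n + 2))

/-- The coface map `δʲ : Δⁿ → Δ^{n+1}` as an order morphism. -/
def dOrder (n : ℕ) (j : Fin (n + 2)) : Fin (n + 1) →o Fin (n + 2) :=
  ⟨fun v => ⟨dval j.val v.val, by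
      have := v.isLt
      unfold dval; split_ifs <;> omega⟩,
    by
      intro a b hab
      have hab' : a.val ≤ b.val := hab
      refine Fin.mk_le_mk.mpr ?_
      unfold dval; split_ifs <;> omega⟩

/-- The vertex map of the coface map `TSⁿ₋ → TS^{n+1}₋` as an order morphism. -/
def minusVert (n : ℕ) (j : Fin (n + 2)) :
    Fin (3 * n + 2 + 1) →o Fin (3 * (n + 1) + 2 + 1) :=
  ⟨fun v => ⟨psival n j.val v.val, by
      have hv := v.isLt
      have hj := j.isLt
      unfold psival dval; split_ifs <;> omega⟩,
    by
      intro a b hab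
      have hab' : a.val ≤ b.val := hab
      have ha := a.isLt
      have hb := b.isLt
      refine Fin.mk_le_mk.mpr ?_
      unfold psival dval; split_ifs <;> omega⟩

lemma inMinus_psival (n j k k' v : ℕ) (hj : j ≤ n + 1) (hk : k ≤ k') (hk' : k' ≤ n)
    (hv : v ≤ 3 * n + 2) (h : inMinus n k k' v) :
    inMinus (n + 1) (dval j k) (dval j k') (psival n j v) := by
  unfold inMinus psival dval at *
  split_ifs at * <;> omega
/-- The coface map `Δ² × Δⁿ → Δ² × Δ^{n+1}` applying `δʲ` to the column index. -/
def dplusSSet (n : ℕ) (j : Fin (n + 2)) : TSplusSSet n ⟶ TSplusSSet (n + 1) where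
  app m := ↾fun p => (p.1, (dOrder n j).comp p.2)
  naturality _ _ φ := rfl

lemma dOrder_apply_val (n : ℕ) (j : Fin (n + 2)) {m : SimplexCategoryᵒᵖ}
    (g : (stdSimplex n).obj m) (x : Fin (m.unop.len + 1)) :
    ((((dOrder n j).comp g : Fin (m.unop.len + 1) →o Fin (n + 2))) x).val =
      dval j.val (g x).val := rfl

/-- The coface map `TSⁿ₊ → TS^{n+1}₊` of scaled simplicial sets. -/
def dplus (n : ℕ) (j : Fin (n + 2)) : TSplus n ⟶ TSplus (n + 1) where
  map := dplusSSet n j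
  preserves := by
    intro σ hσ
    dsimp only [dplusSSet, TypeCat.hom_ofHom, TypeCat.Fun.coe_mk]
    obtain ⟨f, g⟩ := σ
    obtain h | ⟨h1, h2, h3, h4⟩ | ⟨h1, h2, h3, h4, h5⟩ |
      ⟨h1, h2, h3, h4, h5⟩ | ⟨h1, h2, h3, h4, h5⟩ := hσ
    · exact Or.inl (isDegen2_map (dplusSSet n j) h)
    · refine Or.inr (Or.inl ⟨h1, h2, ?_, ?_⟩)
      · exact Fin.lt_def.mpr (by
          have := Fin.lt_def.mp h3
          erw [dOrder_apply_val, dOrder_apply_val]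
          unfold dval; split_ifs <;> omega)
      · exact Fin.lt_def.mpr (by
          have := Fin.lt_def.mp h4
          erw [dOrder_apply_val, dOrder_apply_val]
          unfold dval; split_ifs <;> omega)
    · refine Or.inr (Or.inr (Or.inl ⟨h1, h2, h3, ?_, ?_⟩))
      · exact Fin.le_def.mpr (by
          have := Fin.le_def.mp h4
          erw [dOrder_apply_val, dOrder_apply_val]
          unfold dval; split_ifs <;> omega)
      · exact Fin.lt_def.mpr (by
          have := Fin.lt_def.mp h5
          erw [dOrder_apply_val, dOrder_apply_val]
          unfold dval; split_ifs <;> omega)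
    · refine Or.inr (Or.inr (Or.inr (Or.inl ⟨h1, h2, h3, ?_, ?_⟩)))
      · exact Fin.lt_def.mpr (by
          have := Fin.lt_def.mp h4
          erw [dOrder_apply_val, dOrder_apply_val]
          unfold dval; split_ifs <;> omega)
      · exact Fin.le_def.mpr (by
          have := Fin.le_def.mp h5
          erw [dOrder_apply_val, dOrder_apply_val]
          unfold dval; split_ifs <;> omega)
    · refine Or.inr (Or.inr (Or.inr (Or.inr ⟨h1, h2, h3, ?_, ?_⟩)))
      · exact Fin.le_def.mpr (by
          have := Fin.le_def.mp h4
          erw [dOrder_apply_val, dOrder_apply_val]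
          unfold dval; split_ifs <;> omega)
      · exact Fin.le_def.mpr (by
          have := Fin.le_def.mp h5
          erw [dOrder_apply_val, dOrder_apply_val]
          unfold dval; split_ifs <;> omega)
lemma minusVert_comp_val (n : ℕ) (j : Fin (n + 2)) {m : SimplexCategoryᵒᵖ}
    (h : (stdSimplex (3 * n + 2)).obj m) (x : Fin (m.unop.len + 1)) :
    (((minusVert n j).comp h : Fin (m.unop.len + 1) →o Fin (3 * (n + 1) + 2 + 1)) x).val =
      psival n j.val (h x).val := rfl

/-- The coface map `TSⁿ₋ → TS^{n+1}₋` on underlying simplicial sets. -/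
def dminusSSet (n : ℕ) (j : Fin (n + 2)) : TSminusSSet n ⟶ TSminusSSet (n + 1) where
  app m := ↾fun σ => ⟨(minusVert n j).comp σ.1, by
    obtain ⟨k, k', hk, hk', h⟩ := σ.2
    refine ⟨dval j.val k, dval j.val k', ?_, ?_, fun x => ?_⟩
    · unfold dval; split_ifs <;> omega
    · have := j.isLt; unfold dval; split_ifs <;> omega
    · have hv := (σ.1 x).isLt
      have hj := j.isLt
      exact inMinus_psival n j.val k k' (σ.1 x).val (by omega) hk hk' (by omega) (h x)⟩
  naturality _ _ φ := rfl

set_option maxHeartbeats 3200000 in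
/-- The coface map `TSⁿ₋ → TS^{n+1}₋` of scaled simplicial sets. -/
def dminus (n : ℕ) (j : Fin (n + 2)) : TSminus n ⟶ TSminus (n + 1) where
  map := dminusSSet n j
  preserves := by
    intro σ hσ
    dsimp only [dminusSSet, TypeCat.hom_ofHom, TypeCat.Fun.coe_mk]
    have hj := j.isLt
    have b0 := (σ.1 0).isLt
    have b1 := (σ.1 1).isLt
    have b2 := (σ.1 2).isLt
    obtain h | ⟨h1, h2, h3, h4⟩ | ⟨h1, h2, h3, h4, h5, h6⟩ |
      ⟨h1, h2, h3, h4, h5, h6⟩ := hσ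
    · exact Or.inl (isDegen2_map (dminusSSet n j) h)
    · refine Or.inr (Or.inl ⟨?_, ?_, ?_, ?_⟩) <;>
        erw [minusVert_comp_val, minusVert_comp_val]
      · unfold sameRow at h1 ⊢
        unfold psival dval; split_ifs <;> omega
      · unfold sameRow at h2 ⊢
        unfold psival dval; split_ifs <;> omega
      · unfold sameRow at h1 h2
        unfold psival dval; split_ifs <;> omega
      · unfold sameRow at h1 h2
        unfold psival dval; split_ifs <;> omega
    · refine Or.inr (Or.inr (Or.inl ⟨?_, ?_, ?_, ?_, ?_, ?_⟩)) <;>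
        erw [minusVert_comp_val] <;> try erw [minusVert_comp_val]
      all_goals unfold psival dval; split_ifs <;> omega
    · refine Or.inr (Or.inr (Or.inr ⟨?_, ?_, ?_, ?_, ?_, ?_⟩)) <;>
        erw [minusVert_comp_val] <;> try erw [minusVert_comp_val]
      all_goals unfold psival dval; split_ifs <;> omega
/-- An extensionality lemma for simplices of the standard simplex. -/
lemma stdExt {N : ℕ} {m : SimplexCategoryᵒᵖ} {f g : (stdSimplex N).obj m}
    (h : ∀ x, f x = g x) : f = g :=
  OrderHom.ext _ _ (funext h)

/-- The coface map `Δ¹ × Δⁿ → Δ¹ × Δ^{n+1}`. -/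
def dprodSSet (n : ℕ) (j : Fin (n + 2)) :
    prodSSet (stdSimplex 1) (stdSimplex n) ⟶ prodSSet (stdSimplex 1) (stdSimplex (n + 1)) where
  app m := ↾fun p => (p.1, (dOrder n j).comp p.2)
  naturality _ _ φ := rfl

lemma glue_compat (n : ℕ) (j : Fin (n + 2)) {m : SimplexCategoryᵒᵖ}
    (x : (prodSSet (stdSimplex 1) (stdSimplex n)).obj m) :
    (dminusSSet n j).app m ((iotaMinus n).app m x) =
      (iotaMinus (n + 1)).app m ((dprodSSet n j).app m x) := by
  apply Subtype.ext
  apply stdExt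
  intro y
  apply Fin.ext
  dsimp only [dminusSSet, iotaMinus, dprodSSet, TypeCat.hom_ofHom, TypeCat.Fun.coe_mk]
  by_cases hy : (x.1 y).val = 0
  · erw [minusVert_comp_val, joinVert_app_of_zero n x.1 x.2 y hy,
      joinVert_app_of_zero (n + 1) x.1 ((dOrder n j).comp x.2) y hy]
    have h2 : (((dOrder n j).comp x.2 : _ →o _) y).val = dval j.val (x.2 y).val := rfl
    erw [h2]
    have := (x.2 y).isLt
    unfold psival
    rw [if_pos (by omega)]
  · erw [minusVert_comp_val, joinVert_app_of_ne_zero n x.1 x.2 y hy,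
      joinVert_app_of_ne_zero (n + 1) x.1 ((dOrder n j).comp x.2) y hy]
    have h2 : (((dOrder n j).comp x.2 : _ →o _) y).val = dval j.val (x.2 y).val := rfl
    erw [h2]
    have := (x.2 y).isLt
    unfold psival dval
    split_ifs <;> omega

/-- The coface map `TSⁿ → TS^{n+1}` on underlying simplicial sets. -/
def cofaceSSet (n : ℕ) (j : Fin (n + 2)) : TSnSSet n ⟶ TSnSSet (n + 1) where
  app m := ↾Quot.map (Sum.map ((dplusSSet n j).app m) ((dminusSSet n j).app m))
    (by
      rintro a b ⟨x, rfl, rfl⟩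
      exact ⟨(dprodSSet n j).app m x, congrArg Sum.inl rfl,
        congrArg Sum.inr (glue_compat n j x)⟩)
  naturality m m' φ := by
    refine ConcreteCategory.hom_ext _ _ fun q => ?_
    obtain ⟨a, rfl⟩ := Quot.exists_rep q
    cases a with
    | inl p =>
        have h : (dplusSSet n j).app m' ((TSplusSSet n).map φ p) =
            (TSplusSSet (n + 1)).map φ ((dplusSSet n j).app m p) :=
          FunctorToTypes.naturality (dplusSSet n j) φ p
        exact congrArg (Quot.mk (glueRel (n + 1) m')) (congrArg Sum.inl h)
    | inr q' =>
        have h : (dminusSSet n j).app m' ((TSminusSSet n).map φ q') =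
            (TSminusSSet (n + 1)).map φ ((dminusSSet n j).app m q') :=
          FunctorToTypes.naturality (dminusSSet n j) φ q'
        exact congrArg (Quot.mk (glueRel (n + 1) m')) (congrArg Sum.inr h)

/-- The coface map `dʲ : TSⁿ → TS^{n+1}` of scaled simplicial sets, induced by the
injective monotone map `δʲ : [n] → [n+1]` applied to the column index. -/
def coface (n : ℕ) (j : Fin (n + 2)) : TSn n ⟶ TSn (n + 1) where
  map := cofaceSSet n j
  preserves := by
    rintro x (⟨p, hp, rfl⟩ | ⟨q, hq, rfl⟩)
    · exact Or.inl ⟨_, (dplus n j).preserves p hp, rfl⟩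
    · exact Or.inr ⟨_, (dminus n j).preserves q hq, rfl⟩

/-- The simplices of `Δ² × Δⁿ` lying in `Δ² × ∂Δⁿ`. -/
def plusBdryP (n : ℕ) : ∀ m : SimplexCategoryᵒᵖ, Set ((TSplusSSet n).obj m) :=
  fun _ => {σ | ∃ s : Fin (n + 1), ∀ x, σ.2 x ≠ s}

/-- The simplices of `TSⁿ₋` lying in `Ω(Δ² × ∂Δⁿ)`: those all of whose vertices
avoid some column `s`. -/
def minusBdryP (n : ℕ) : ∀ m : SimplexCategoryᵒᵖ, Set ((TSminusSSet n).obj m) :=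
  fun _ => {σ | ∃ s : ℕ, s ≤ n ∧ ∀ x, colIdx n (σ.1 x).val ≠ s}


/-! ### Auxiliary lemmas for Statement 9 -/

section Statement9Aux

lemma dval_inj (j : ℕ) {a b : ℕ} (h : dval j a = dval j b) : a = b := by
  unfold dval at h; split_ifs at h <;> omega

lemma dval_ne (j a : ℕ) : dval j a ≠ j := by
  unfold dval; split_ifs <;> omega

set_option maxHeartbeats 1600000 in
lemma psival_inj (n j : ℕ) {v w : ℕ} (hj : j ≤ n + 1) (_hv : v ≤ 3 * n + 2)
    (_hw : w ≤ 3 * n + 2) (h : psival n j v = psival n j w) : v = w := by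
  unfold psival dval at h; split_ifs at h <;> omega

set_option maxHeartbeats 1600000 in
lemma colIdx_psival_ne (n j v : ℕ) (hj : j ≤ n + 1) (hv : v ≤ 3 * n + 2) :
    colIdx (n + 1) (psival n j v) ≠ j := by
  unfold colIdx psival dval; split_ifs <;> omega

lemma dOrder_inj (n : ℕ) (j : Fin (n + 2)) {m : SimplexCategoryᵒᵖ}
    {g g' : (stdSimplex n).obj m}
    (h : (dOrder n j).comp g = (dOrder n j).comp g') : g = g' := by
  apply stdExt; intro x
  apply Fin.ext
  apply dval_inj j.val
  have hx : ((dOrder n j).comp g : Fin (m.unop.len + 1) →o Fin (n + 2)) x =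
      ((dOrder n j).comp g' : Fin (m.unop.len + 1) →o Fin (n + 2)) x := by rw [h]
  exact congrArg Fin.val hx

lemma dplus_inj (n : ℕ) (j : Fin (n + 2)) (m : SimplexCategoryᵒᵖ) :
    Function.Injective ((dplusSSet n j).app m) := by
  intro p q h
  obtain ⟨f, g⟩ := p
  obtain ⟨f', g'⟩ := q
  have h' : (f, (dOrder n j).comp g) = (f', (dOrder n j).comp g') := h
  injection h' with h1 h2
  exact Prod.ext h1 (dOrder_inj n j h2)

lemma dminus_inj (n : ℕ) (j : Fin (n + 2)) (m : SimplexCategoryᵒᵖ) :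
    Function.Injective ((dminusSSet n j).app m) := by
  intro p q h
  apply Subtype.ext; apply stdExt; intro x; apply Fin.ext
  have hx : (((dminusSSet n j).app m p).1 x).val =
      (((dminusSSet n j).app m q).1 x).val := by rw [h]
  have hv := (p.1 x).isLt
  have hw := (q.1 x).isLt
  have hj := j.isLt
  exact psival_inj n j.val (by omega) (by omega) (by omega) hx

/-! #### Normal forms for the pushout quotient -/

lemma vert02_val (y : Fin 2) : (vert02 y).val = 2 * y.val := by
  fin_cases y <;> rfl

def toHalf {m : SimplexCategoryᵒᵖ} (f : (stdSimplex 2).obj m)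
    (hf : ∀ x, (f x).val ≠ 1) : (stdSimplex 1).obj m :=
  ⟨fun x => if (f x).val = 0 then 0 else 1, by
    intro a b hab
    have h : (f a).val ≤ (f b).val := f.monotone hab
    have h1 := (f a).isLt
    have ha := hf a
    have hb := hf b
    dsimp only
    split_ifs <;> first | decide | (exfalso; omega)⟩

lemma vert02_toHalf {m : SimplexCategoryᵒᵖ} (f : (stdSimplex 2).obj m)
    (hf : ∀ x, (f x).val ≠ 1) : vert02.comp (toHalf f hf) = f := by
  apply stdExt; intro x
  have h1 := (f x).isLt
  have h2 := hf x
  show vert02 (if (f x).val = 0 then 0 else 1) = f x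
  apply Fin.ext
  rw [vert02_val]
  split_ifs with h0
  · simp; omega
  · simp; omega

lemma toHalf_vert02 {m : SimplexCategoryᵒᵖ} (g : (stdSimplex 1).obj m)
    (hf : ∀ x, ((vert02.comp g : Fin (m.unop.len + 1) →o Fin 3) x).val ≠ 1) :
    toHalf (vert02.comp g) hf = g := by
  apply stdExt; intro x
  show (if ((vert02.comp g : Fin (m.unop.len + 1) →o Fin 3) x).val = 0 then (0 : Fin 2) else 1)
      = g x
  have h2 := (g x).isLt
  have hv : ((vert02.comp g : Fin (m.unop.len + 1) →o Fin 3) x).val = 2 * (g x).val :=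
    vert02_val (g x)
  apply Fin.ext
  split_ifs with h0
  · simp; omega
  · simp; omega

open Classical in
noncomputable def nf (n : ℕ) (m : SimplexCategoryᵒᵖ)
    (a : (TSplusSSet n).obj m ⊕ (TSminusSSet n).obj m) :
      (TSplusSSet n).obj m ⊕ (TSminusSSet n).obj m := match a with
  | Sum.inl p =>
      if h : ∀ x, (p.1 x).val ≠ 1 then
        Sum.inr ((iotaMinus n).app m (toHalf p.1 h, p.2))
      else Sum.inl p
  | Sum.inr q => Sum.inr q

lemma nf_rel (n : ℕ) (m : SimplexCategoryᵒᵖ)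
    {a b : (TSplusSSet n).obj m ⊕ (TSminusSSet n).obj m}
    (h : glueRel n m a b) : nf n m a = nf n m b := by
  obtain ⟨x, rfl, rfl⟩ := h
  have hc : ∀ y, ((((iotaPlus n).app m x).1) y).val ≠ 1 := by
    intro y
    have h1 := vert02_val (x.1 y)
    have h2 := (x.1 y).isLt
    show (vert02 (x.1 y)).val ≠ 1
    omega
  show nf n m (Sum.inl ((iotaPlus n).app m x)) = Sum.inr ((iotaMinus n).app m x)
  simp only [nf]
  rw [dif_pos hc]
  exact congrArg Sum.inr (congrArg ((iotaMinus n).app m)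
    (Prod.ext (toHalf_vert02 x.1 hc) rfl))

lemma nf_eq_of_quot_eq (n : ℕ) (m : SimplexCategoryᵒᵖ)
    {a b : (TSplusSSet n).obj m ⊕ (TSminusSSet n).obj m}
    (h : Quot.mk (glueRel n m) a = Quot.mk (glueRel n m) b) :
    nf n m a = nf n m b :=
  congrArg (Quot.lift (nf n m) (fun _ _ hr => nf_rel n m hr)) h

lemma quot_nf (n : ℕ) (m : SimplexCategoryᵒᵖ)
    (a : (TSplusSSet n).obj m ⊕ (TSminusSSet n).obj m) :
    Quot.mk (glueRel n m) a = Quot.mk (glueRel n m) (nf n m a) := by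
  cases a with
  | inr q => rfl
  | inl p =>
    simp only [nf]
    split_ifs with h
    · have hp : (iotaPlus n).app m (toHalf p.1 h, p.2) = p := by
        apply Prod.ext
        · exact vert02_toHalf p.1 h
        · rfl
      exact Quot.sound ⟨(toHalf p.1 h, p.2), (congrArg Sum.inl hp).symm, rfl⟩
    · rfl

lemma nf_map (n : ℕ) (j : Fin (n + 2)) (m : SimplexCategoryᵒᵖ)
    (a : (TSplusSSet n).obj m ⊕ (TSminusSSet n).obj m) :
    nf (n + 1) m (Sum.map ((dplusSSet n j).app m) ((dminusSSet n j).app m) a) =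
      Sum.map ((dplusSSet n j).app m) ((dminusSSet n j).app m) (nf n m a) := by
  cases a with
  | inr q => rfl
  | inl p =>
    simp only [Sum.map_inl, nf]
    split_ifs with h1 h2 h2
    · exact congrArg Sum.inr (glue_compat n j (toHalf p.1 h2, p.2)).symm
    · exact absurd h1 h2
    · exact absurd h2 h1
    · rfl

lemma coface_inj (n : ℕ) (j : Fin (n + 2)) (m : SimplexCategoryᵒᵖ) :
    Function.Injective ((cofaceSSet n j).app m) := by
  intro x y h
  obtain ⟨a, rfl⟩ := TSn_exists_rep n m x
  obtain ⟨b, rfl⟩ := TSn_exists_rep n m y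
  have h1 : nf (n + 1) m
        (Sum.map ((dplusSSet n j).app m) ((dminusSSet n j).app m) a)
      = nf (n + 1) m
        (Sum.map ((dplusSSet n j).app m) ((dminusSSet n j).app m) b) :=
    nf_eq_of_quot_eq (n + 1) m h
  rw [nf_map, nf_map] at h1
  have h2 : nf n m a = nf n m b :=
    Function.Injective.sumMap (dplus_inj n j m) (dminus_inj n j m) h1
  rw [quot_nf n m a, quot_nf n m b, h2]

/-! #### Inverting the coface maps on the boundary -/

def undval (s c : ℕ) : ℕ := if c < s then c else c - 1

def unD (n : ℕ) (s : Fin (n + 2)) {m : SimplexCategoryᵒᵖ}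
    (g : (stdSimplex (n + 1)).obj m) (hg : ∀ x, g x ≠ s) : (stdSimplex n).obj m :=
  ⟨fun x => ⟨undval s.val (g x).val, by
      have h1 := (g x).isLt
      have h2 := s.isLt
      have hne : (g x).val ≠ s.val := fun hh => hg x (Fin.ext hh)
      unfold undval; split_ifs <;> omega⟩, by
    intro a b hab
    have h : (g a).val ≤ (g b).val := g.monotone hab
    refine Fin.mk_le_mk.mpr ?_
    unfold undval; split_ifs <;> omega⟩

lemma dOrder_unD (n : ℕ) (s : Fin (n + 2)) {m : SimplexCategoryᵒᵖ}
    (g : (stdSimplex (n + 1)).obj m) (hg : ∀ x, g x ≠ s) :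
    (dOrder n s).comp (unD n s g hg) = g := by
  apply stdExt; intro x; apply Fin.ext
  have hne : (g x).val ≠ s.val := fun hh => hg x (Fin.ext hh)
  show dval s.val (undval s.val (g x).val) = (g x).val
  unfold dval undval; split_ifs <;> omega

def unpsival (n s w : ℕ) : ℕ :=
  if w ≤ n + 1 then undval s w
  else if w ≤ 2 * n + 3 then 2 * n + 1 - undval s (2 * n + 3 - w)
  else 2 * n + 2 + undval s (w - (2 * n + 4))

set_option maxHeartbeats 1600000 in
lemma psival_unpsival (n s w : ℕ) (hs : s ≤ n + 1) (hw : w ≤ 3 * n + 5)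
    (h : colIdx (n + 1) w ≠ s) : psival n s (unpsival n s w) = w := by
  unfold colIdx at h
  unfold psival unpsival dval undval
  split_ifs at h ⊢ <;> omega

set_option maxHeartbeats 1600000 in
lemma inMinus_unpsival (n s k k' w : ℕ) (hs : s ≤ n + 1) (hk : k ≤ k')
    (hk' : k' ≤ n + 1) (hw : w ≤ 3 * n + 5) (h : inMinus (n + 1) k k' w) :
    inMinus n (undval s k) (undval s k') (unpsival n s w) := by
  unfold inMinus at h ⊢
  unfold unpsival undval
  split_ifs <;> omega

def unMinus (n s : ℕ) (hs : s ≤ n + 1) {m : SimplexCategoryᵒᵖ}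
    (h : (stdSimplex (3 * (n + 1) + 2)).obj m) : (stdSimplex (3 * n + 2)).obj m :=
  ⟨fun x => ⟨unpsival n s (h x).val, by
      have h1 := (h x).isLt
      unfold unpsival undval; split_ifs <;> omega⟩, by
    intro a b hab
    have hm : (h a).val ≤ (h b).val := h.monotone hab
    have ha := (h a).isLt
    have hb := (h b).isLt
    refine Fin.mk_le_mk.mpr ?_
    unfold unpsival undval; split_ifs <;> omega⟩

def unMinusSub (n s : ℕ) (hs : s ≤ n + 1) {m : SimplexCategoryᵒᵖ}
    (q : (TSminusSSet (n + 1)).obj m) : (TSminusSSet n).obj m :=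
  ⟨unMinus n s hs q.1, by
    obtain ⟨k, k', hk, hk', h⟩ := q.2
    refine ⟨undval s k, undval s k', ?_, ?_, fun x => ?_⟩
    · unfold undval; split_ifs <;> omega
    · unfold undval; split_ifs <;> omega
    · exact inMinus_unpsival n s k k' (q.1 x).val hs hk hk'
        (by have := (q.1 x).isLt; omega) (h x)⟩

lemma dminus_unMinusSub (n : ℕ) (j : Fin (n + 2)) {m : SimplexCategoryᵒᵖ}
    (q : (TSminusSSet (n + 1)).obj m)
    (hq : ∀ x, colIdx (n + 1) (q.1 x).val ≠ j.val) :
    (dminusSSet n j).app m (unMinusSub n j.val (Nat.lt_succ_iff.mp j.isLt) q) = q := by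
  apply Subtype.ext; apply stdExt; intro x; apply Fin.ext
  show psival n j.val (unpsival n j.val (q.1 x).val) = (q.1 x).val
  exact psival_unpsival n j.val (q.1 x).val (Nat.lt_succ_iff.mp j.isLt)
    (by have := (q.1 x).isLt; omega) (hq x)

end Statement9Aux

/-- For every `n ≥ 1` (here reindexed: for every `n`, with
`TS^{n-1} → TSⁿ` written as `TSⁿ → TS^{n+1}`): (a) each coface map
`dʲ : TSⁿ → TS^{n+1}` (`0 ≤ j ≤ n+1`) is a monomorphism of scaled simplicial
sets; and (b) the union of the images of `d⁰, …, d^{n+1}` in `TS^{n+1}` is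
exactly the subcomplex of `TS^{n+1}` given by the union of the image of
`Δ² × ∂Δ^{n+1} ⊆ TS^{n+1}₊` and the image of `Ω(Δ² × ∂Δ^{n+1}) ⊆ TS^{n+1}₋`. -/
theorem coface_mono_and_boundary (n : ℕ) :
    (∀ j : Fin (n + 2), Mono (coface n j)) ∧
    (∀ (m : SimplexCategoryᵒᵖ) (x : (TSnSSet (n + 1)).obj m),
      (∃ (j : Fin (n + 2)) (y : (TSnSSet n).obj m),
          x = (coface n j).map.app m y) ↔
        x ∈ TSnSubP (n + 1) (plusBdryP (n + 1)) (minusBdryP (n + 1)) m) := by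
  constructor
  · intro j
    refine ⟨fun {Z} g₁ g₂ h => ?_⟩
    apply SHom.ext
    apply NatTrans.ext
    funext m
    refine ConcreteCategory.hom_ext _ _ fun z => ?_
    apply coface_inj n j m
    exact congrArg (fun k : SHom Z (TSn (n + 1)) => k.map.app m z) h
  · intro m x
    constructor
    · rintro ⟨j, y, rfl⟩
      obtain ⟨a, rfl⟩ := TSn_exists_rep n m y
      cases a with
      | inl p =>
        exact Or.inl ⟨(dplusSSet n j).app m p,
          ⟨j, fun x => Fin.ne_of_val_ne (dval_ne j.val (p.2 x).val)⟩, rfl⟩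
      | inr q =>
        refine Or.inr ⟨(dminusSSet n j).app m q,
          ⟨j.val, Nat.lt_succ_iff.mp j.isLt, fun x => ?_⟩, rfl⟩
        have hb := (q.1 x).isLt
        exact colIdx_psival_ne n j.val (q.1 x).val (Nat.lt_succ_iff.mp j.isLt) (by omega)
    · rintro (⟨p, ⟨s, hsp⟩, rfl⟩ | ⟨q, ⟨s, hsn, hsq⟩, rfl⟩)
      · refine ⟨s, Quot.mk _ (Sum.inl (p.1, unD n s p.2 hsp)), ?_⟩
        have hp : (dplusSSet n s).app m (p.1, unD n s p.2 hsp) = p := by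
          apply Prod.ext
          · rfl
          · exact dOrder_unD n s p.2 hsp
        exact (congrArg (fun t => Quot.mk (glueRel (n + 1) m) (Sum.inl t)) hp).symm
      · refine ⟨⟨s, by omega⟩, Quot.mk _
          (Sum.inr (unMinusSub n s hsn q)), ?_⟩
        exact (congrArg (Quot.mk _)
          (congrArg Sum.inr (dminus_unMinusSub n ⟨s, by omega⟩ q hsq))).symm

end ScaledSSet
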